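/- In a 1-nested network, if a node v has two hybrid children h1 and h2, then v is the split node of a reticulation cycle for at least one of h1, h2. -/

import Mathlib

/-- An evolutionary network: a rooted directed acyclic graph. -/
structure EvoNet (V : Type*) where
  arc : V → V → Prop
  root : V
  acyclic : ∀ v : V, ¬ Relation.TransGen arc v v
  rooted : ∀ v : V, Relation.ReflTransGen arc root v

namespace EvoNet

variable {V : Type*}

/-- A hybrid node: in-degree at least 2. -/
def IsHybrid (N : EvoNet V) (v : V) : Prop :=
  ∃ u w : V, u ≠ w ∧ N.arc u v ∧ N.arc w v

/-- A tree node: in-degree at most 1. -/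
def IsTreeNode (N : EvoNet V) (v : V) : Prop := ¬ N.IsHybrid v

/-- A (directed) path, given as its nonempty list of nodes. -/
def IsPath (N : EvoNet V) (p : List V) : Prop := p ≠ [] ∧ p.Chain' N.arc

/-- The intermediate (non-endpoint) nodes of a path. -/
def interm (p : List V) : Set V := {x | x ∈ (p.drop 1).dropLast}

/-- A reticulation cycle for the hybrid node `hend`: a pair of internally
disjoint nontrivial paths with the same origin (the split node), both ending
in `hend`. -/
structure RetCycle (N : EvoNet V) where
  hend : V
  p : List V
  q : List V
  isPath_p : N.IsPath p
  isPath_q : N.IsPath q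
  len_p : 2 ≤ p.length
  len_q : 2 ≤ q.length
  same_origin : p.head? = q.head?
  last_p : p.getLast? = some hend
  last_q : q.getLast? = some hend
  hybrid : N.IsHybrid hend
  intDisjoint : ∀ x : V, x ∈ interm p → x ∉ interm q
  ne : p ≠ q

/-- The nodes of a reticulation cycle. -/
def RetCycle.nodes {N : EvoNet V} (c : RetCycle N) : Set V :=
  {x | x ∈ c.p ∨ x ∈ c.q}

/-- The arcs of a reticulation cycle. -/
def RetCycle.arcs {N : EvoNet V} (c : RetCycle N) : Set (V × V) :=
  {e | e ∈ c.p.zip c.p.tail ∨ e ∈ c.q.zip c.q.tail}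

/-- The intermediate nodes of a reticulation cycle. -/
def RetCycle.intermNodes {N : EvoNet V} (c : RetCycle N) : Set V :=
  interm c.p ∪ interm c.q

/-- `s` is the split node of the reticulation cycle `c`. -/
def RetCycle.SplitIs {N : EvoNet V} (c : RetCycle N) (s : V) : Prop :=
  c.p.head? = some s

/-- Two reticulation cycles are the same (as unordered pairs of merge paths). -/
def RetCycle.Equiv {N : EvoNet V} (c₁ c₂ : RetCycle N) : Prop :=
  (c₁.p = c₂.p ∧ c₁.q = c₂.q) ∨ (c₁.p = c₂.q ∧ c₁.q = c₂.p)

/-- 1-nested: no node is intermediate in reticulation cycles for two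
different hybrid nodes. -/
def OneNested (N : EvoNet V) : Prop :=
  ∀ c₁ c₂ : RetCycle N, c₁.hend ≠ c₂.hend →
    ∀ x : V, x ∈ c₁.intermNodes → x ∉ c₂.intermNodes

/-- Galled tree: distinct reticulation cycles have disjoint node sets. -/
def Galled (N : EvoNet V) : Prop :=
  ∀ c₁ c₂ : RetCycle N, ¬ c₁.Equiv c₂ → Disjoint c₁.nodes c₂.nodes

/-- Weakly galled tree: distinct reticulation cycles have disjoint arc sets. -/
def WeaklyGalled (N : EvoNet V) : Prop :=
  ∀ c₁ c₂ : RetCycle N, ¬ c₁.Equiv c₂ → Disjoint c₁.arcs c₂.arcs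

/-- 2-hybrid: every hybrid node has in-degree exactly 2. -/
def TwoHybrid (N : EvoNet V) : Prop :=
  ∀ v : V, N.IsHybrid v →
    ∃ u w : V, u ≠ w ∧ N.arc u v ∧ N.arc w v ∧ ∀ z : V, N.arc z v → z = u ∨ z = w

/-- Hybrid-1: every hybrid node has out-degree exactly 1. -/
def HybridOne (N : EvoNet V) : Prop :=
  ∀ v : V, N.IsHybrid v → ∃! w : V, N.arc v w

/-- Semibinary: hybrid nodes have in-degree 2 and out-degree 1. -/
def Semibinary (N : EvoNet V) : Prop := N.TwoHybrid ∧ N.HybridOne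

/-- Node of out-degree exactly 2. -/
def OutDegTwo (N : EvoNet V) (v : V) : Prop :=
  ∃ u w : V, u ≠ w ∧ N.arc v u ∧ N.arc v w ∧ ∀ z : V, N.arc v z → z = u ∨ z = w

/-- An internal (non-leaf) node. -/
def IsInternal (N : EvoNet V) (v : V) : Prop := ∃ w : V, N.arc v w

/-- Binary (fully resolved): semibinary and internal tree nodes have
out-degree 2. -/
def Binary (N : EvoNet V) : Prop :=
  N.Semibinary ∧ ∀ v : V, N.IsTreeNode v → N.IsInternal v → N.OutDegTwo v

/-- Undirected adjacency induced by a set of arcs. -/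
def uadj (A : Set (V × V)) (x y : V) : Prop := (x, y) ∈ A ∨ (y, x) ∈ A

/-- The vertices of a subgraph given by a set of arcs. -/
def everts (A : Set (V × V)) : Set V := {x | ∃ y : V, (x, y) ∈ A ∨ (y, x) ∈ A}

/-- Connectedness of the underlying undirected graph of a set of arcs. -/
def EConnected (A : Set (V × V)) : Prop :=
  ∀ x y : V, x ∈ everts A → y ∈ everts A → Relation.ReflTransGen (uadj A) x y

/-- Remove a node and all arcs incident to it. -/
def avoid (A : Set (V × V)) (v : V) : Set (V × V) :=
  {e ∈ A | e.1 ≠ v ∧ e.2 ≠ v}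

/-- A biconnected subgraph of a network: a set of arcs of the network whose
underlying undirected graph is connected and remains connected after the
removal of any single node (with all arcs incident to it). -/
def Biconnected (N : EvoNet V) (A : Set (V × V)) : Prop :=
  (∀ e ∈ A, N.arc e.1 e.2) ∧ EConnected A ∧ ∀ v : V, EConnected (avoid A v)

/-- Level-1: no biconnected subgraph contains more than one hybrid node. -/
def LevelOne (N : EvoNet V) : Prop :=
  ∀ A : Set (V × V), N.Biconnected A →
    ∀ h₁ h₂ : V, N.IsHybrid h₁ → N.IsHybrid h₂ →
      h₁ ∈ everts A → h₂ ∈ everts A → h₁ = h₂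

/-- `v` is a descendant of `u`. -/
def Desc (N : EvoNet V) (u v : V) : Prop := Relation.ReflTransGen N.arc u v

/-- `v` is a proper descendant of `u`. -/
def ProperDesc (N : EvoNet V) (u v : V) : Prop := Relation.TransGen N.arc u v

/-- `w` is a minimal common ancestor of `u` and `v`: a common ancestor that is
a proper ancestor of no other common ancestor of them. -/
def IsMCA (N : EvoNet V) (w u v : V) : Prop :=
  N.Desc w u ∧ N.Desc w v ∧
    ∀ z : V, N.Desc z u → N.Desc z v → ¬ N.ProperDesc w z

end EvoNet

/-!
Let `u ≠ v` be a second parent of the hybrid node `h`. Take paths from the root to `v` and to `u`,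
and let `s` be the last node of the path to `u` that lies on the path to `v`. The segments of the
two paths after `s`, closed by the arcs into `h`, form a reticulation cycle for `h` in which `v` is
either the split node `s` or an intermediate node. If `v` were intermediate in such cycles for both
`h₁` and `h₂`, the network would not be 1-nested.
-/

namespace List

variable {α : Type*}

theorem exists_eq_append_cons_forall_not_of_mem {S : α → Prop} :
    ∀ {l : List α} {x : α}, x ∈ l → S x →
      ∃ l₁ s l₂, l = l₁ ++ s :: l₂ ∧ S s ∧ ∀ y ∈ l₂, ¬ S y
  | _ :: l, x, hx, hxS => by
    by_cases htail : ∃ y ∈ l, S y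
    · obtain ⟨y, hy, hyS⟩ := htail
      obtain ⟨l₁, s, l₂, rfl, hs, hl₂⟩ := exists_eq_append_cons_forall_not_of_mem hy hyS
      exact ⟨_ :: l₁, s, l₂, rfl, hs, hl₂⟩
    · push Not at htail
      obtain rfl | hx := mem_cons.1 hx
      · exact ⟨[], x, l, rfl, hxS, htail⟩
      · exact absurd hxS (htail x hx)

theorem IsChain.cons_append_singleton {r : α → α → Prop} {s v h : α} {p : List α}
    (hp : IsChain r (s :: p)) (hpv : (s :: p).getLast (cons_ne_nil _ _) = v) (hvh : r v h) :
    IsChain r (s :: (p ++ [h])) :=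
  cons_append .. ▸ hp.append (isChain_singleton h) (by simp [getLast?_eq_some_getLast, hpv, hvh])

end List

namespace Relation

open List

variable {α : Type*} {r : α → α → Prop}

theorem ReflTransGen.exists_chains_disjoint_tails {a u v : α}
    (hv : ReflTransGen r a v) (hu : ReflTransGen r a u) :
    ∃ s p q, IsChain r (s :: p) ∧ (s :: p).getLast (cons_ne_nil _ _) = v ∧
      IsChain r (s :: q) ∧ (s :: q).getLast (cons_ne_nil _ _) = u ∧ ∀ x ∈ q, x ∉ p := by
  obtain ⟨P, hP, hPv⟩ := exists_isChain_cons_of_relationReflTransGen hv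
  obtain ⟨Q, hQ, hQu⟩ := exists_isChain_cons_of_relationReflTransGen hu
  obtain ⟨q₁, s, q, hQeq, hsP, hq⟩ := exists_eq_append_cons_forall_not_of_mem
    (S := (· ∈ a :: P)) mem_cons_self mem_cons_self
  obtain ⟨p₁, p, hPeq⟩ := append_of_mem hsP
  refine ⟨s, p, q, hP.suffix ⟨p₁, hPeq.symm⟩, ?_, hQ.suffix ⟨q₁, hQeq.symm⟩, ?_, ?_⟩
  · simpa only [hPeq, getLast_append_of_ne_nil _ (cons_ne_nil _ _)] using hPv
  · simpa only [hQeq, getLast_append_of_ne_nil _ (cons_ne_nil _ _)] using hQu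
  · exact fun x hxq hxp => hq x hxq (hPeq ▸ mem_append_right _ (mem_cons_of_mem _ hxp))

end Relation

namespace EvoNet

open List

variable {V : Type*} {N : EvoNet V}

@[simp]
theorem interm_cons_append_singleton (s h : V) (p : List V) :
    interm (s :: (p ++ [h])) = {x | x ∈ p} := by
  simp [interm]

theorem exists_retCycle_of_chains {s u v h : V} {p q : List V}
    (hp : IsChain N.arc (s :: p)) (hpv : (s :: p).getLast (cons_ne_nil _ _) = v)
    (hq : IsChain N.arc (s :: q)) (hqu : (s :: q).getLast (cons_ne_nil _ _) = u)
    (hpq : ∀ x ∈ q, x ∉ p) (huv : u ≠ v) (hvh : N.arc v h) (huh : N.arc u h) :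
    ∃ c : RetCycle N, c.hend = h ∧ c.p = s :: (p ++ [h]) := by
  refine ⟨⟨h, s :: (p ++ [h]), s :: (q ++ [h]),
    ⟨cons_ne_nil _ _, hp.cons_append_singleton hpv hvh⟩,
    ⟨cons_ne_nil _ _, hq.cons_append_singleton hqu huh⟩, by simp, by simp, rfl,
    by rw [← cons_append, getLast?_concat], by rw [← cons_append, getLast?_concat],
    ⟨u, v, huv, huh, hvh⟩, ?_, ?_⟩, rfl, rfl⟩
  · simpa using fun x hxp hxq => hpq x hxq hxp
  · intro hpq_eq
    obtain rfl : p = q := by simpa using hpq_eq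
    rcases p.eq_nil_or_concat with rfl | ⟨t, x, rfl⟩
    · exact huv (hqu.symm.trans hpv)
    · exact hpq x (by simp) (by simp)

theorem exists_retCycle_split_or_interm_of_arc {v h : V} (hh : N.IsHybrid h) (hvh : N.arc v h) :
    ∃ c : RetCycle N, c.hend = h ∧ (c.SplitIs v ∨ v ∈ interm c.p) := by
  obtain ⟨u, huv, huh⟩ : ∃ u, u ≠ v ∧ N.arc u h := by
    obtain ⟨a, b, hab, hah, hbh⟩ := hh
    by_cases hav : a = v
    · exact ⟨b, fun hbv => hab (hav.trans hbv.symm), hbh⟩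
    · exact ⟨a, hav, hah⟩
  obtain ⟨s, p, q, hp, hpv, hq, hqu, hpq⟩ :=
    (N.rooted v).exists_chains_disjoint_tails (N.rooted u)
  obtain ⟨c, rfl, hc⟩ := exists_retCycle_of_chains hp hpv hq hqu hpq huv hvh huh
  refine ⟨c, rfl, ?_⟩
  rw [RetCycle.SplitIs, hc, interm_cons_append_singleton]
  rcases eq_or_ne p [] with rfl | hne
  · exact Or.inl (by simpa using hpv)
  · rw [getLast_cons hne] at hpv
    exact Or.inr (hpv ▸ getLast_mem hne)

end EvoNet

theorem oneNested_two_hybrid_children_split {V : Type*} (N : EvoNet V)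
    (h1n : N.OneNested) (v h₁ h₂ : V) (hne : h₁ ≠ h₂)
    (hh₁ : N.IsHybrid h₁) (hh₂ : N.IsHybrid h₂)
    (ha₁ : N.arc v h₁) (ha₂ : N.arc v h₂) :
    (∃ c : EvoNet.RetCycle N, c.hend = h₁ ∧ c.SplitIs v) ∨
    (∃ c : EvoNet.RetCycle N, c.hend = h₂ ∧ c.SplitIs v) := by
  obtain ⟨c₁, rfl, hs₁ | hi₁⟩ := EvoNet.exists_retCycle_split_or_interm_of_arc hh₁ ha₁
  · exact Or.inl ⟨c₁, rfl, hs₁⟩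
  obtain ⟨c₂, rfl, hs₂ | hi₂⟩ := EvoNet.exists_retCycle_split_or_interm_of_arc hh₂ ha₂
  · exact Or.inr ⟨c₂, rfl, hs₂⟩
  exact absurd (Or.inl hi₂) (h1n c₁ c₂ hne v (Or.inl hi₁))
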